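/- For finite multisets x and y of natural numbers of the same cardinality, x ≤_m y if and only if either x = y, or there exists a natural number a such that the multiplicity of a in x is strictly less than the multiplicity of a in y and, for every natural number b > a, the multiplicities of b in x and in y are equal. -/

import Mathlib

/-! Both sides describe the lexicographic order on multiplicity functions, compared from the
largest value downwards. A common maximum contributes equally to both multiplicity functions,
so removing it preserves that comparison; this matches the recursive clause of `MLt`, and
induction on the size of `x` does the rest. -/

namespace MsetPaper

/-- The maximum element of a multiset of naturals (`0` for the empty multiset). -/
def mmax (s : Multiset ℕ) : ℕ := s.sup

/-- The strict multiset order `x <ₘ y` of the paper: either `x` is empty and `y` is not,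
or both are nonempty and either `max x < max y`, or the maxima agree and the multisets
with one occurrence of the maximum removed are again strictly ordered. -/
inductive MLt : Multiset ℕ → Multiset ℕ → Prop
  | empty {y : Multiset ℕ} : y ≠ 0 → MLt 0 y
  | maxLt {x y : Multiset ℕ} : x ≠ 0 → y ≠ 0 → mmax x < mmax y → MLt x y
  | maxEq {x y : Multiset ℕ} : x ≠ 0 → y ≠ 0 → mmax x = mmax y →
      MLt (x.erase (mmax x)) (y.erase (mmax y)) → MLt x y

/-- The (non-strict) multiset order `x ≤ₘ y`. -/
def MLe (x y : Multiset ℕ) : Prop := MLt x y ∨ x = y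

/-- The multiset of values taken by a vector. -/
def msetOf {n : ℕ} (x : Fin n → ℕ) : Multiset ℕ := (List.ofFn x : List ℕ)

open Multiset

lemma mmax_mem {s : Multiset ℕ} (hs : s ≠ 0) : mmax s ∈ s := by
  obtain ⟨a, ha, hsup⟩ := s.toFinset.exists_mem_eq_sup (toFinset_nonempty.mpr hs) id
  have hmmax : mmax s = s.toFinset.sup id := by
    simp only [mmax, Finset.sup_def, toFinset_val, map_id, sup_dedup]
  rw [hmmax, hsup]
  exact mem_toFinset.mp ha

lemma le_mmax_of_mem {s : Multiset ℕ} {a : ℕ} (h : a ∈ s) : a ≤ mmax s :=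
  le_sup h

lemma count_eq_zero_of_mmax_lt {s : Multiset ℕ} {b : ℕ} (h : mmax s < b) : s.count b = 0 :=
  count_eq_zero.mpr fun hb => (le_mmax_of_mem hb).not_gt h

/-- Lexicographic comparison of the multiplicity functions, read from the top value down. -/
def CountLexLt (x y : Multiset ℕ) : Prop :=
  ∃ a : ℕ, x.count a < y.count a ∧ ∀ b : ℕ, a < b → x.count b = y.count b

theorem countLexLt_cons_cons_iff {x y : Multiset ℕ} (m : ℕ) :
    CountLexLt (m ::ₘ x) (m ::ₘ y) ↔ CountLexLt x y := by
  simp only [CountLexLt, count_cons, add_lt_add_iff_right, add_left_inj]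

theorem countLexLt_erase_erase_iff {x y : Multiset ℕ} {m : ℕ} (hx : m ∈ x) (hy : m ∈ y) :
    CountLexLt (x.erase m) (y.erase m) ↔ CountLexLt x y := by
  conv_rhs => rw [← cons_erase hx, ← cons_erase hy]
  exact (countLexLt_cons_cons_iff m).symm

theorem countLexLt_of_forall_lt_mmax {x y : Multiset ℕ} (hy : y ≠ 0)
    (hx : ∀ b ∈ x, b < mmax y) : CountLexLt x y := by
  refine ⟨mmax y, ?_, fun b hb => ?_⟩
  · rw [count_eq_zero.mpr fun h => (hx _ h).false]
    exact count_pos.mpr (mmax_mem hy)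
  · rw [count_eq_zero_of_mmax_lt hb, count_eq_zero.mpr fun h => (hx _ h).asymm hb]

namespace CountLexLt

variable {x y : Multiset ℕ}

theorem ne_zero (h : CountLexLt x y) : y ≠ 0 := by
  rintro rfl
  obtain ⟨a, ha, -⟩ := h
  exact (Nat.not_lt_zero _) (count_zero a ▸ ha)

theorem mmax_le (h : CountLexLt x y) : mmax x ≤ mmax y := by
  obtain ⟨a, ha, habove⟩ := h
  refine sup_le.mpr fun b hb => ?_
  rcases le_or_gt b a with hba | hab
  · exact hba.trans (le_mmax_of_mem (count_pos.mp (Nat.zero_lt_of_lt ha)))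
  · exact le_mmax_of_mem (count_pos.mp (habove b hab ▸ count_pos.mpr hb))

end CountLexLt

theorem MLt.countLexLt {x y : Multiset ℕ} (h : MLt x y) : CountLexLt x y := by
  induction h with
  | empty hy => exact countLexLt_of_forall_lt_mmax hy fun b hb => absurd hb (notMem_zero b)
  | maxLt _ hy hlt =>
    exact countLexLt_of_forall_lt_mmax hy fun b hb => (le_mmax_of_mem hb).trans_lt hlt
  | maxEq hx hy heq _ ih =>
    rw [heq] at ih
    exact (countLexLt_erase_erase_iff (heq ▸ mmax_mem hx) (mmax_mem hy)).mp ih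

theorem MLt.of_countLexLt {x y : Multiset ℕ} (h : CountLexLt x y) : MLt x y := by
  obtain rfl | hx := eq_or_ne x 0
  · exact .empty h.ne_zero
  obtain hlt | heq := h.mmax_le.lt_or_eq
  · exact .maxLt hx h.ne_zero hlt
  · have hm : mmax x ∈ y := heq ▸ mmax_mem h.ne_zero
    refine .maxEq hx h.ne_zero heq (MLt.of_countLexLt ?_)
    rw [← heq]
    exact (countLexLt_erase_erase_iff (mmax_mem hx) hm).mpr h
termination_by card x
decreasing_by exact card_erase_lt_of_mem (mmax_mem hx)

theorem stmt4_general (x y : Multiset ℕ) :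
    MLe x y ↔
      x = y ∨ ∃ a : ℕ, x.count a < y.count a ∧ ∀ b : ℕ, a < b → x.count b = y.count b := by
  rw [MLe, or_comm]
  exact or_congr_right ⟨MLt.countLexLt, MLt.of_countLexLt⟩

/-- For multisets of equal cardinality, `x ≤ₘ y` iff `x = y` or some value occurs
strictly more often in `y` than in `x` while all larger values occur equally often. -/
theorem stmt4 (x y : Multiset ℕ) (h : Multiset.card x = Multiset.card y) :
    MLe x y ↔
      x = y ∨ ∃ a : ℕ, x.count a < y.count a ∧ ∀ b : ℕ, a < b → x.count b = y.count b :=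
  stmt4_general x y

end MsetPaper
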